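/- There exists a property graph and a set of ProGS constraints distinguishing ≥_3 l.Person from ≥_3^→(l ∧ ⇒Person): specifically, the single-node graph with one node n labelled Person and three distinct self-loop edges each labelled l satisfies the node constraint ≥_3^→(l ∧ ⇒Person) at n but does not satisfy ≥_3 l.Person at n (under any total assignment). -/

import Mathlib

/-- A property graph (restricted to the components relevant for path semantics):
edges have a source node, a destination node, and a set of labels. -/
structure PGraph (Node Edge Lab : Type*) where
  src : Edge → Node
  dst : Edge → Node
  eLab : Edge → Set Lab

/-- ProGS path expressions: p ::= l_E | p⁻ | p₁/p₂ | p₁ || p₂ | p* | p+ | ?p -/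
inductive PathExpr (Lab : Type*) where
  | lbl (l : Lab)
  | inv (p : PathExpr Lab)
  | seq (p₁ p₂ : PathExpr Lab)
  | alt (p₁ p₂ : PathExpr Lab)
  | star (p : PathExpr Lab)
  | plus (p : PathExpr Lab)
  | opt (p : PathExpr Lab)

/-- Path semantics: `PathSem G p n n'` means `n' ∈ ⟦p⟧^G_n`.  The clauses for
`p+` (and hence `p*`) realize the least-fixed-point reading of the recursive
definition ⟦p+⟧_n = ⟦p⟧_n ∪ ⟦p/p+⟧_n (and ∅ if ⟦p⟧_n = ∅). -/
inductive PathSem {Node Edge Lab : Type*} (G : PGraph Node Edge Lab) :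
    PathExpr Lab → Node → Node → Prop where
  | lbl {l : Lab} {e : Edge} {n n' : Node} :
      G.src e = n → G.dst e = n' → l ∈ G.eLab e → PathSem G (.lbl l) n n'
  | inv {p n n'} : PathSem G p n' n → PathSem G (.inv p) n n'
  | seq {p₁ p₂ n m n'} :
      PathSem G p₁ n m → PathSem G p₂ m n' → PathSem G (.seq p₁ p₂) n n'
  | altL {p₁ p₂ n n'} : PathSem G p₁ n n' → PathSem G (.alt p₁ p₂) n n'
  | altR {p₁ p₂ n n'} : PathSem G p₂ n n' → PathSem G (.alt p₁ p₂) n n'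
  | plusOne {p n n'} : PathSem G p n n' → PathSem G (.plus p) n n'
  | plusStep {p n m n'} :
      PathSem G p n m → PathSem G (.plus p) m n' → PathSem G (.plus p) n n'
  | starRefl {p n} : PathSem G (.star p) n n
  | starPlus {p n n'} : PathSem G (.plus p) n n' → PathSem G (.star p) n n'
  | optRefl {p n} : PathSem G (.opt p) n n
  | optOne {p n n'} : PathSem G p n n' → PathSem G (.opt p) n n'

universe u

open Classical

/-- A full property graph G = (N, E, ρ, λ, σ): node/edge identifier types,
ρ given by src/dst, λ by nlab/eLabs, σ by nprop/eprop. -/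
structure PG (Node Edge Lab Key Val : Type u) where
  src : Edge → Node
  dst : Edge → Node
  nlab : Node → Set Lab
  eLabs : Edge → Set Lab
  nprop : Node → Key → Set Val
  eprop : Edge → Key → Set Val

/-- The associated path-semantics graph. -/
def PG.toPGraph {Node Edge Lab Key Val : Type u} (G : PG Node Edge Lab Key Val) :
    PGraph Node Edge Lab :=
  ⟨G.src, G.dst, G.eLabs⟩

mutual
/-- ProGS node constraints. -/
inductive NC (SN SE Node Edge Lab Key Val : Type u) where
  | top
  | shape (s : SN)
  | nid (n : Node)
  | lab (l : Lab)
  | neg (φ : NC SN SE Node Edge Lab Key Val)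
  | and (φ₁ φ₂ : NC SN SE Node Edge Lab Key Val)
  | geqPath (i : ℕ) (p : PathExpr Lab) (φ : NC SN SE Node Edge Lab Key Val)
  | geqKey (i : ℕ) (k : Key) (f : Val → Prop)
  | geqIn (i : ℕ) (φ : EC SN SE Node Edge Lab Key Val)
  | geqOut (i : ℕ) (φ : EC SN SE Node Edge Lab Key Val)

/-- ProGS edge constraints. -/
inductive EC (SN SE Node Edge Lab Key Val : Type u) where
  | top
  | shape (s : SE)
  | eid (e : Edge)
  | lab (l : Lab)
  | neg (φ : EC SN SE Node Edge Lab Key Val)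
  | and (φ₁ φ₂ : EC SN SE Node Edge Lab Key Val)
  | geqKey (i : ℕ) (k : Key) (f : Val → Prop)
  | srcC (φ : NC SN SE Node Edge Lab Key Val)   -- the constraint ⇐ φ_N
  | dstC (φ : NC SN SE Node Edge Lab Key Val)   -- the constraint ⇒ φ_N
end

variable {SN SE Node Edge Lab Key Val : Type u}

mutual
/-- Three-valued evaluation of node constraints (values 0, 1/2, 1 in ℚ). -/
noncomputable def evalNC (G : PG Node Edge Lab Key Val)
    (AN : SN → Node → ℚ) (AE : SE → Edge → ℚ) :
    NC SN SE Node Edge Lab Key Val → Node → ℚ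
  | .top, _ => 1
  | .shape s, n => AN s n
  | .nid n', n => if n' = n then 1 else 0
  | .lab l, n => if l ∈ G.nlab n then 1 else 0
  | .neg φ, n => 1 - evalNC G AN AE φ n
  | .and φ₁ φ₂, n => min (evalNC G AN AE φ₁ n) (evalNC G AN AE φ₂ n)
  | .geqPath i p φ, n =>
      if i ≤ {n₂ | PathSem G.toPGraph p n n₂ ∧ evalNC G AN AE φ n₂ = 1}.ncard then 1
      else if {n₂ | PathSem G.toPGraph p n n₂}.ncard -
          {n₂ | PathSem G.toPGraph p n n₂ ∧ evalNC G AN AE φ n₂ = 0}.ncard < i then 0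
      else 1/2
  | .geqKey i k f, n => if i ≤ {v | v ∈ G.nprop n k ∧ f v}.ncard then 1 else 0
  | .geqIn i φ, n =>
      if i ≤ {e | G.dst e = n ∧ evalEC G AN AE φ e = 1}.ncard then 1
      else if {e | G.dst e = n}.ncard -
          {e | G.dst e = n ∧ evalEC G AN AE φ e = 0}.ncard < i then 0
      else 1/2
  | .geqOut i φ, n =>
      if i ≤ {e | G.src e = n ∧ evalEC G AN AE φ e = 1}.ncard then 1
      else if {e | G.src e = n}.ncard -
          {e | G.src e = n ∧ evalEC G AN AE φ e = 0}.ncard < i then 0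
      else 1/2

/-- Three-valued evaluation of edge constraints. -/
noncomputable def evalEC (G : PG Node Edge Lab Key Val)
    (AN : SN → Node → ℚ) (AE : SE → Edge → ℚ) :
    EC SN SE Node Edge Lab Key Val → Edge → ℚ
  | .top, _ => 1
  | .shape s, e => AE s e
  | .eid e', e => if e' = e then 1 else 0
  | .lab l, e => if l ∈ G.eLabs e then 1 else 0
  | .neg φ, e => 1 - evalEC G AN AE φ e
  | .and φ₁ φ₂, e => min (evalEC G AN AE φ₁ e) (evalEC G AN AE φ₂ e)
  | .geqKey i k f, e => if i ≤ {v | v ∈ G.eprop e k ∧ f v}.ncard then 1 else 0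
  | .srcC φ, e => evalNC G AN AE φ (G.src e)
  | .dstC φ, e => evalNC G AN AE φ (G.dst e)
end

/-- Target node queries. -/
inductive NQ (Node Lab Key Val : Type u) where
  | bot
  | nid (n : Node)
  | lab (l : Lab)
  | key (k : Key)
  | kv (v : Val) (k : Key)

/-- Target edge queries. -/
inductive EQ (Edge Lab Key Val : Type u) where
  | bot
  | eid (e : Edge)
  | lab (l : Lab)
  | key (k : Key)
  | kv (v : Val) (k : Key)

/-- Evaluation of target node queries. -/
def evalNQ (G : PG Node Edge Lab Key Val) : NQ Node Lab Key Val → Set Node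
  | .bot => ∅
  | .nid n => {n}
  | .lab l => {n | l ∈ G.nlab n}
  | .key k => {n | G.nprop n k ≠ ∅}
  | .kv v k => {n | v ∈ G.nprop n k}

/-- Evaluation of target edge queries. -/
def evalEQ (G : PG Node Edge Lab Key Val) : EQ Edge Lab Key Val → Set Edge
  | .bot => ∅
  | .eid e => {e}
  | .lab l => {e | l ∈ G.eLabs e}
  | .key k => {e | G.eprop e k ≠ ∅}
  | .kv v k => {e | v ∈ G.eprop e k}

/-- A system of shapes: every node shape name in SN (resp. edge shape name
in SE) has a constraint and a target query. -/
structure ShapeSys (SN SE Node Edge Lab Key Val : Type u) where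
  ncon : SN → NC SN SE Node Edge Lab Key Val
  ntgt : SN → NQ Node Lab Key Val
  econ : SE → EC SN SE Node Edge Lab Key Val
  etgt : SE → EQ Edge Lab Key Val

/-- A partial assignment Σ (given by AN, AE) is strictly faithful for the set
of shapes with node-shape names A_N and edge-shape names A_E: its values lie
in {0, 1/2, 1}, every atom is assigned exactly the evaluation of the
corresponding constraint, and every target is assigned 1. -/
def Faithful (G : PG Node Edge Lab Key Val) (Sh : ShapeSys SN SE Node Edge Lab Key Val)
    (A_N : Set SN) (A_E : Set SE) (AN : SN → Node → ℚ) (AE : SE → Edge → ℚ) : Prop :=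
  (∀ s ∈ A_N, ∀ n, AN s n ∈ ({0, 1/2, 1} : Set ℚ)) ∧
  (∀ s ∈ A_E, ∀ e, AE s e ∈ ({0, 1/2, 1} : Set ℚ)) ∧
  (∀ s ∈ A_N, ∀ n, AN s n = evalNC G AN AE (Sh.ncon s) n) ∧
  (∀ s ∈ A_E, ∀ e, AE s e = evalEC G AN AE (Sh.econ s) e) ∧
  (∀ s ∈ A_N, ∀ n ∈ evalNQ G (Sh.ntgt s), AN s n = 1) ∧
  (∀ s ∈ A_E, ∀ e ∈ evalEQ G (Sh.etgt s), AE s e = 1)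

/-- Conformance: G conforms to the set of shapes named by A_N, A_E iff some
strictly faithful assignment exists. -/
def Conforms (G : PG Node Edge Lab Key Val)
    (Sh : ShapeSys SN SE Node Edge Lab Key Val) (A_N : Set SN) (A_E : Set SE) : Prop :=
  ∃ AN AE, Faithful G Sh A_N A_E AN AE

/-- The single-node graph with one node labelled `Person` (modelled by `true`)
and three distinct self-loop edges each labelled `l` (modelled by `false`). -/
def loopGraph : PG Unit (Fin 3) Bool Unit Unit where
  src := fun _ => ()
  dst := fun _ => ()
  nlab := fun _ => {true}
  eLabs := fun _ => {false}
  nprop := fun _ _ => ∅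
  eprop := fun _ _ => ∅

/-! Qualified edge restrictions count edges, whereas a path expression denotes a *set* of
target nodes. The three parallel loops of `loopGraph` are three distinct `l`-edges into a
`Person` node, but they all reach the same single node, so at most one node can be counted. -/

section Counting

variable {SN SE Node Edge Lab Key Val : Type u} (G : PG Node Edge Lab Key Val)
  (AN : SN → Node → ℚ) (AE : SE → Edge → ℚ)

theorem evalNC_geqOut_eq_one {i : ℕ} {φ : EC SN SE Node Edge Lab Key Val} {n : Node}
    (h : i ≤ {e | G.src e = n ∧ evalEC G AN AE φ e = 1}.ncard) :
    evalNC G AN AE (.geqOut i φ) n = 1 := by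
  rw [evalNC, if_pos h]

/-- `Finite Node` rules out the junk value `ncard = 0` of an infinite reachable set,
under which the qualified subset could still have `ncard ≥ i`. -/
theorem evalNC_geqPath_eq_zero [Finite Node] {i : ℕ} {p : PathExpr Lab}
    {φ : NC SN SE Node Edge Lab Key Val} {n : Node}
    (h : {n₂ | PathSem G.toPGraph p n n₂}.ncard < i) :
    evalNC G AN AE (.geqPath i p φ) n = 0 := by
  have hwit : {n₂ | PathSem G.toPGraph p n n₂ ∧ evalNC G AN AE φ n₂ = 1}.ncard < i :=
    lt_of_le_of_lt (Set.ncard_le_ncard fun _ hx => hx.1) h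
  rw [evalNC, if_neg hwit.not_ge, if_pos (lt_of_le_of_lt (Nat.sub_le _ _) h)]

end Counting

theorem loopGraph_evalEC_lab_and_dstC_lab {SN SE : Type}
    (AN : SN → Unit → ℚ) (AE : SE → Fin 3 → ℚ) (e : Fin 3) :
    evalEC loopGraph AN AE (EC.and (EC.lab false) (EC.dstC (NC.lab true))) e = 1 := by
  simp [evalEC, evalNC, loopGraph]

/-- the constraints ≥₃ l.Person and ≥₃→(l ∧ ⇒Person) are
distinguished by `loopGraph`: under any total (two-valued) assignment, its
single node satisfies the qualified edge restriction ≥₃→(l ∧ ⇒Person)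
(three distinct outgoing edges labelled l with Person-labelled destination)
but not the path restriction ≥₃ l.Person (only one distinct reachable node). -/
theorem edge_vs_path_counting {SN SE : Type}
    (AN : SN → Unit → ℚ) (AE : SE → Fin 3 → ℚ)
    (htotN : ∀ s n, AN s n = 0 ∨ AN s n = 1)
    (htotE : ∀ s e, AE s e = 0 ∨ AE s e = 1) :
    evalNC loopGraph AN AE
        (NC.geqOut 3 (EC.and (EC.lab false) (EC.dstC (NC.lab true)))) () = 1 ∧
    evalNC loopGraph AN AE
        (NC.geqPath 3 (PathExpr.lbl false) (NC.lab true)) () ≠ 1 := by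
  constructor
  · apply evalNC_geqOut_eq_one
    have hall : {e : Fin 3 | loopGraph.src e = () ∧
        evalEC loopGraph AN AE (EC.and (EC.lab false) (EC.dstC (NC.lab true))) e = 1} =
        Set.univ :=
      Set.eq_univ_of_forall fun e => ⟨rfl, loopGraph_evalEC_lab_and_dstC_lab AN AE e⟩
    rw [hall, Set.ncard_univ, Nat.card_eq_fintype_card, Fintype.card_fin]
  · have hreach : {n₂ | PathSem loopGraph.toPGraph (PathExpr.lbl false) () n₂}.ncard < 3 :=
      lt_of_le_of_lt (Set.ncard_le_card _) (by simp)
    rw [evalNC_geqPath_eq_zero _ _ _ hreach]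
    norm_num
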